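/- Under the hypotheses of the main theorem (nonzero regressors x_1,…,x_N ∈ ℝⁿ, r_x = min_t ‖x_t‖₂, data y_t = x_tᵀθ° + v_t, ε ≥ 0, I_ε^0 = {t : |v_t| ≤ ε}, ℓ satisfying P1–P4 with constant α_ℓ > 0, γ > 0, α ∈ (0,1], and stability condition ρ_α(X)/(1 + e^{−γℓ(ε)}) + e^{−γℓ(ε)}·|I_ε^0|/N > 1), assume in addition that ℓ is strictly increasing on [0,∞). Then for any maximizer θ* of θ ↦ ∑_{k=1}^N exp(−γℓ(y_k − x_kᵀθ)) and any c ≥ 0 such that ℓ(c) ≥ (1/(γ·α_ℓ))·ln(1/μ_ℓ), it holds that ‖θ* − θ°‖₂ ≤ c/(α·r_x). -/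

import Mathlib

open scoped BigOperators

noncomputable section

/-- Euclidean dot product on `ℝⁿ`. -/
def dotR {n : ℕ} (u v : Fin n → ℝ) : ℝ := ∑ i, u i * v i

/-- Euclidean 2-norm on `ℝⁿ`. -/
def nrm {n : ℕ} (v : Fin n → ℝ) : ℝ := Real.sqrt (∑ i, v i ^ 2)

/-- The index set `𝓘_α(X,η) = {t : |x_tᵀη| ≥ α‖x_t‖₂‖η‖₂}`. -/
def Iset {n N : ℕ} (x : Fin N → Fin n → ℝ) (a : ℝ) (η : Fin n → ℝ) : Finset (Fin N) :=
  Finset.univ.filter fun t => a * nrm (x t) * nrm η ≤ |dotR (x t) η|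

/-- The correlation measure `ρ_α(X) = (1/N)·inf_{η ≠ 0} |𝓘_α(X,η)|`. -/
def rhoX {n N : ℕ} (x : Fin N → Fin n → ℝ) (a : ℝ) : ℝ :=
  (1 / N) * sInf ((fun η : Fin n → ℝ => ((Iset x a η).card : ℝ)) '' {η | η ≠ 0})

/-- The constant `μ` as a function of `s = e^{-γℓ(ε)}`, `q = |I_ε^0|/N` and `ρ = ρ_α(X)`. -/
def muVal (s q ρ : ℝ) : ℝ := (1 + s) / (q + ρ - 1) * (ρ / (1 + s) + s * q - 1)

/-!
Suppose `‖θ* - θ°‖ > c / (α r_x)` and put `η = θ* - θ°`, `s = e^{-γℓ(ε)}`. Counting shows that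
`𝓘_α(X,η) ∩ I_ε^0` has at least `N (|I_ε^0|/N + ρ_α(X) - 1) > 0` elements. On each of them
`|x_tᵀη| > c`, so by P4 the residual of `θ*` has loss above `α_ℓ ℓ(c) - ℓ(ε)` and its term in the
objective is below `e^{-γ α_ℓ ℓ(c)} / s ≤ μ / s`; every other term is at most `1`. The objective at
`θ°` is at least `|I_ε^0| s`, and `μ` is exactly the constant for which the resulting strict upper
bound at `θ*` does not exceed this, contradicting the maximality of `θ*`.
-/

open Finset

lemma nrm_nonneg {n : ℕ} (v : Fin n → ℝ) : 0 ≤ nrm v := Real.sqrt_nonneg _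

lemma nrm_pos {n : ℕ} {v : Fin n → ℝ} (hv : v ≠ 0) : 0 < nrm v := by
  refine Real.sqrt_pos.mpr (lt_of_le_of_ne (by positivity) (Ne.symm ?_))
  contrapose! hv
  funext i
  simpa using (sum_eq_zero_iff_of_nonneg fun i _ => sq_nonneg (v i)).mp hv i (mem_univ i)

lemma nrm_zero {n : ℕ} : nrm (0 : Fin n → ℝ) = 0 := by simp [nrm]

lemma dotR_sub {n : ℕ} (u v w : Fin n → ℝ) : dotR u (v - w) = dotR u v - dotR u w := by
  simp only [dotR, Pi.sub_apply, mul_sub, sum_sub_distrib]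

lemma iInf_nrm_pos {n : ℕ} {ι : Type*} [Finite ι] [Nonempty ι] {x : ι → Fin n → ℝ}
    (hx : ∀ t, x t ≠ 0) : 0 < ⨅ t, nrm (x t) := by
  obtain ⟨t, ht⟩ := exists_eq_ciInf_of_finite (f := fun t => nrm (x t))
  exact ht ▸ nrm_pos (hx t)

lemma lt_abs_dotR_of_mem_Iset {n N : ℕ} {x : Fin N → Fin n → ℝ} {a r c : ℝ} {η : Fin n → ℝ}
    {t : Fin N} (ha : 0 ≤ a) (ht : t ∈ Iset x a η) (hr : r ≤ nrm (x t))
    (hc : c < a * r * nrm η) : c < |dotR (x t) η| :=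
  calc c < a * r * nrm η := hc
    _ ≤ a * nrm (x t) * nrm η := by gcongr; exact nrm_nonneg η
    _ ≤ |dotR (x t) η| := (mem_filter.mp ht).2

lemma card_add_card_le_card_inter {ι : Type*} [Fintype ι] [DecidableEq ι] (s t : Finset ι) :
    #s + #t ≤ Fintype.card ι + #(s ∩ t) := by
  rw [← card_union_add_card_inter]
  exact Nat.add_le_add_right (card_le_univ _) _

section Correlation

variable {n N : ℕ} (x : Fin N → Fin n → ℝ) (a : ℝ)

lemma rhoX_nonneg : 0 ≤ rhoX x a :=
  mul_nonneg (by positivity) (Real.sInf_nonneg (by rintro _ ⟨η, _, rfl⟩; positivity))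

lemma natCast_mul_rhoX_le_card {η : Fin n → ℝ} (hη : η ≠ 0) :
    N * rhoX x a ≤ #(Iset x a η) := by
  have hle : sInf ((fun η : Fin n → ℝ => ((Iset x a η).card : ℝ)) '' {η | η ≠ 0}) ≤
      #(Iset x a η) :=
    csInf_le ⟨0, by rintro _ ⟨η, _, rfl⟩; positivity⟩ ⟨η, hη, rfl⟩
  rcases N.eq_zero_or_pos with rfl | hN
  · simp
  · rwa [rhoX, ← mul_assoc, mul_one_div_cancel (by positivity), one_mul]

lemma rhoX_le_one : rhoX x a ≤ 1 := by
  rcases N.eq_zero_or_pos with rfl | hN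
  · simp [rhoX]
  obtain hS | ⟨_, η, hη, rfl⟩ :=
    ((fun η : Fin n → ℝ => ((Iset x a η).card : ℝ)) '' {η | η ≠ 0}).eq_empty_or_nonempty
  · simp [rhoX, hS]
  · have hcard : (#(Iset x a η) : ℝ) ≤ N := by
      exact_mod_cast (card_le_univ (Iset x a η)).trans_eq (Fintype.card_fin N)
    have := (natCast_mul_rhoX_le_card x a hη).trans hcard
    nlinarith [(Nat.cast_pos (α := ℝ)).mpr hN]

lemma card_div_le_one (I : Finset (Fin N)) : (#I : ℝ) / N ≤ 1 :=
  div_le_one_of_le₀ (by exact_mod_cast (card_le_univ I).trans_eq (Fintype.card_fin N))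
    (Nat.cast_nonneg N)

lemma natCast_mul_sub_one_le_card_inter {η : Fin n → ℝ} (hη : η ≠ 0) (I : Finset (Fin N)) :
    N * (#I / N + rhoX x a - 1) ≤ #(Iset x a η ∩ I) := by
  have hρ := natCast_mul_rhoX_le_card x a hη
  have hcard : (#(Iset x a η) + #I : ℝ) ≤ N + #(Iset x a η ∩ I) := by
    exact_mod_cast (Fintype.card_fin N) ▸ card_add_card_le_card_inter (Iset x a η) I
  have hI : (N : ℝ) * (#I / N) ≤ #I := by
    rcases eq_or_ne (N : ℝ) 0 with h | h
    · simp [h]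
    · rw [mul_div_cancel₀ _ h]
  linarith

end Correlation

section Loss

variable {ℓ : ℝ → ℝ}

lemma loss_eq_of_abs_eq (hP3 : ∀ a b, |a| ≤ |b| → ℓ a ≤ ℓ b) {a b : ℝ} (h : |a| = |b|) :
    ℓ a = ℓ b :=
  (hP3 a b h.le).antisymm (hP3 b a h.ge)

lemma sub_lt_loss_sub {αl c d v ε : ℝ} (hαl : 0 < αl) (hP3 : ∀ a b, |a| ≤ |b| → ℓ a ≤ ℓ b)
    (hP4 : ∀ a b, αl * ℓ a - ℓ b ≤ ℓ (a - b)) (hmono : StrictMonoOn ℓ (Set.Ici 0))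
    (hc : 0 ≤ c) (hcd : c < |d|) (hv : |v| ≤ ε) :
    αl * ℓ c - ℓ ε < ℓ (v - d) := by
  have hd : ℓ c < ℓ d := loss_eq_of_abs_eq hP3 (abs_abs d) ▸ hmono hc (abs_nonneg d) hcd
  have hvε : ℓ v ≤ ℓ ε := hP3 v ε (hv.trans (le_abs_self ε))
  rw [loss_eq_of_abs_eq hP3 (abs_sub_comm v d)]
  linarith [hP4 d v, mul_lt_mul_of_pos_left hd hαl]

variable {ι : Type*} [Fintype ι] {γ : ℝ}

lemma card_mul_exp_neg_loss_le_sum (hP3 : ∀ a b, |a| ≤ |b| → ℓ a ≤ ℓ b) (hγ : 0 ≤ γ)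
    (r : ι → ℝ) (ε : ℝ) :
    #{t | |r t| ≤ ε} * Real.exp (-(γ * ℓ ε)) ≤ ∑ t, Real.exp (-(γ * ℓ (r t))) := by
  rw [← nsmul_eq_mul, ← sum_const]
  calc ∑ _ ∈ {t | |r t| ≤ ε}, Real.exp (-(γ * ℓ ε))
      ≤ ∑ t ∈ {t | |r t| ≤ ε}, Real.exp (-(γ * ℓ (r t))) := by
        refine sum_le_sum fun t ht => ?_
        gcongr
        exact hP3 _ _ ((mem_filter.mp ht).2.trans (le_abs_self ε))
    _ ≤ ∑ t, Real.exp (-(γ * ℓ (r t))) :=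
        sum_le_sum_of_subset_of_nonneg (subset_univ _) fun _ _ _ => (Real.exp_pos _).le

lemma sum_exp_neg_loss_lt (hP1 : ∀ a, 0 ≤ ℓ a) (hγ : 0 < γ) (r : ι → ℝ) {M : Finset ι}
    (hM : M.Nonempty) {B : ℝ} (hB : ∀ t ∈ M, B < ℓ (r t)) :
    ∑ t, Real.exp (-(γ * ℓ (r t))) < #M * Real.exp (-(γ * B)) + (Fintype.card ι - #M) := by
  classical
  have hin : ∑ t ∈ M, Real.exp (-(γ * ℓ (r t))) < #M * Real.exp (-(γ * B)) := by
    rw [← nsmul_eq_mul, ← sum_const]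
    exact sum_lt_sum_of_nonempty hM fun t ht => by gcongr; exact hB t ht
  have hout : ∑ t ∈ Mᶜ, Real.exp (-(γ * ℓ (r t))) ≤ Fintype.card ι - #M := by
    rw [← Nat.cast_sub (card_le_univ M), ← card_compl, ← nsmul_one, ← sum_const]
    exact sum_le_sum fun t _ =>
      Real.exp_le_one_iff.mpr (neg_nonpos.mpr (mul_nonneg hγ.le (hP1 _)))
  rw [← sum_add_sum_compl M]
  linarith

end Loss

lemma lt_loss_residual {n N : ℕ} {x : Fin N → Fin n → ℝ} {θo θ : Fin n → ℝ} {v y : Fin N → ℝ}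
    (hy : ∀ t, y t = dotR (x t) θo + v t) {ℓ : ℝ → ℝ} {αl a c ε : ℝ} (hαl : 0 < αl)
    (hP3 : ∀ a b, |a| ≤ |b| → ℓ a ≤ ℓ b) (hP4 : ∀ a b, αl * ℓ a - ℓ b ≤ ℓ (a - b))
    (hmono : StrictMonoOn ℓ (Set.Ici 0)) (ha : 0 ≤ a) (hc : 0 ≤ c)
    (hfar : c < a * (⨅ t, nrm (x t)) * nrm (θ - θo)) {t : Fin N}
    (ht : t ∈ Iset x a (θ - θo)) (hv : |v t| ≤ ε) :
    αl * ℓ c - ℓ ε < ℓ (y t - dotR (x t) θ) := by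
  have hr : (⨅ t, nrm (x t)) ≤ nrm (x t) :=
    ciInf_le ⟨0, by rintro _ ⟨t, rfl⟩; exact nrm_nonneg _⟩ t
  convert sub_lt_loss_sub hαl hP3 hP4 hmono hc (lt_abs_dotR_of_mem_Iset ha ht hr hfar) hv using 2
  rw [hy, dotR_sub]
  ring

lemma sub_one_pos_of_stability {s q ρ : ℝ} (hs0 : 0 < s) (hs1 : s ≤ 1) (hq0 : 0 ≤ q)
    (hρ0 : 0 ≤ ρ) (hstab : 1 < ρ / (1 + s) + s * q) : 0 < q + ρ - 1 := by
  have : ρ / (1 + s) ≤ ρ := div_le_self hρ0 (by linarith)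
  nlinarith

lemma muVal_pos {s q ρ : ℝ} (hs0 : 0 < s) (hD : 0 < q + ρ - 1)
    (hstab : 1 < ρ / (1 + s) + s * q) : 0 < muVal s q ρ :=
  mul_pos (div_pos (by linarith) hD) (by linarith)

lemma exp_neg_mul_le_of_log_inv_le {k L μ : ℝ} (hk : 0 < k) (hμ : 0 < μ)
    (h : 1 / k * Real.log (1 / μ) ≤ L) : Real.exp (-(k * L)) ≤ μ := by
  rw [one_div_mul_eq_div, div_le_iff₀' hk, one_div, Real.log_inv] at h
  rw [← Real.le_log_iff_exp_le hμ]
  linarith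

lemma mul_add_sub_le_of_le_muVal {s q ρ N m e : ℝ} (hs0 : 0 < s) (hs1 : s ≤ 1) (hq0 : 0 ≤ q)
    (hq1 : q ≤ 1) (hρ1 : ρ ≤ 1) (hD : 0 < q + ρ - 1) (hN : 0 ≤ N) (hm : N * (q + ρ - 1) ≤ m)
    (he : e * s ≤ muVal s q ρ) :
    m * e + (N - m) ≤ N * q * s := by
  have hμD : muVal s q ρ * (q + ρ - 1) = ρ + s * q * (1 + s) - (1 + s) := by
    unfold muVal
    field_simp
  have hμs : muVal s q ρ ≤ s := by
    refine le_of_mul_le_mul_right ?_ hD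
    nlinarith [mul_nonneg (sub_nonneg.mpr hρ1) (sub_nonneg.mpr hs1), mul_le_one₀ hs1 hq0 hq1]
  have hm0 : 0 ≤ m := (mul_nonneg hN hD.le).trans hm
  refine le_of_mul_le_mul_right ?_ hs0
  -- `(m e + N - m) s ≤ N s + m (μ - s) ≤ N s + N (q + ρ - 1) (μ - s) = N q s² - N (1 - ρ) (1 - s)`
  nlinarith [mul_le_mul_of_nonneg_left he hm0, mul_le_mul_of_nonpos_right hm (sub_nonpos.mpr hμs),
    mul_nonneg hN (mul_nonneg (sub_nonneg.mpr hρ1) (sub_nonneg.mpr hs1))]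

theorem mce_error_bound_general {n N : ℕ}
    (x : Fin N → Fin n → ℝ) (hx : ∀ t, x t ≠ 0)
    (θo : Fin n → ℝ) (v y : Fin N → ℝ)
    (hy : ∀ t, y t = dotR (x t) θo + v t)
    (ε : ℝ)
    (ℓ : ℝ → ℝ) (αl : ℝ) (hαl : 0 < αl)
    (hP1 : ∀ a, 0 ≤ ℓ a)
    (hP3 : ∀ a b, |a| ≤ |b| → ℓ a ≤ ℓ b)
    (hP4 : ∀ a b, αl * ℓ a - ℓ b ≤ ℓ (a - b))
    (hmono : StrictMonoOn ℓ (Set.Ici (0 : ℝ)))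
    (γ : ℝ) (hγ : 0 < γ) (a : ℝ) (ha : 0 < a)
    (hstab : 1 <
      rhoX x a / (1 + Real.exp (-(γ * ℓ ε))) +
        Real.exp (-(γ * ℓ ε)) *
          (((Finset.univ.filter fun t => |v t| ≤ ε).card : ℝ) / N))
    (θs : Fin n → ℝ)
    (hmax : ∀ θ : Fin n → ℝ,
      ∑ k, Real.exp (-(γ * ℓ (y k - dotR (x k) θ))) ≤
        ∑ k, Real.exp (-(γ * ℓ (y k - dotR (x k) θs))))
    (c : ℝ) (hc : 0 ≤ c)
    (hcl : (1 / (γ * αl)) *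
        Real.log (1 /
          muVal (Real.exp (-(γ * ℓ ε)))
            (((Finset.univ.filter fun t => |v t| ≤ ε).card : ℝ) / N)
            (rhoX x a)) ≤ ℓ c) :
    nrm (θs - θo) ≤ c / (a * (⨅ t, nrm (x t))) := by
  -- for `N = 0` the stability condition reads `1 < 0`, the divisions by `N` giving `0`
  have hN : 0 < N := Nat.pos_of_ne_zero (by rintro rfl; simp [rhoX] at hstab; linarith)
  have : Nonempty (Fin N) := ⟨⟨0, hN⟩⟩
  set s := Real.exp (-(γ * ℓ ε))
  set I₀ : Finset (Fin N) := {t | |v t| ≤ ε}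
  set q : ℝ := #I₀ / N
  have hs0 : 0 < s := Real.exp_pos _
  have hs1 : s ≤ 1 := Real.exp_le_one_iff.mpr (neg_nonpos.mpr (mul_nonneg hγ.le (hP1 ε)))
  have hq0 : 0 ≤ q := by positivity
  have hD := sub_one_pos_of_stability hs0 hs1 hq0 (rhoX_nonneg x a) hstab
  by_contra! hfar
  have hcη : c < a * (⨅ t, nrm (x t)) * nrm (θs - θo) :=
    (div_lt_iff₀' (mul_pos ha (iInf_nrm_pos hx))).mp hfar
  have hη : θs - θo ≠ 0 := fun h => by rw [h, nrm_zero, mul_zero] at hcη; linarith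
  set M := Iset x a (θs - θo) ∩ I₀
  have hM := natCast_mul_sub_one_le_card_inter x a hη I₀
  have hMne : M.Nonempty :=
    card_pos.mp <| by exact_mod_cast (mul_pos (Nat.cast_pos.mpr hN) hD).trans_le hM
  have hlow : #I₀ * s ≤ ∑ k, Real.exp (-(γ * ℓ (y k - dotR (x k) θo))) := by
    simpa only [hy, add_sub_cancel_left] using card_mul_exp_neg_loss_le_sum hP3 hγ.le v ε
  have hup := sum_exp_neg_loss_lt hP1 hγ (fun k => y k - dotR (x k) θs) hMne fun t ht =>
    lt_loss_residual hy hαl hP3 hP4 hmono ha.le hc hcη (mem_inter.mp ht).1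
      (mem_filter.mp (mem_inter.mp ht).2).2
  have he : Real.exp (-(γ * (αl * ℓ c - ℓ ε))) * s ≤ muVal s q (rhoX x a) :=
    calc _ = Real.exp (-(γ * αl * ℓ c)) := by rw [← Real.exp_add]; ring_nf
      _ ≤ _ := exp_neg_mul_le_of_log_inv_le (mul_pos hγ hαl) (muVal_pos hs0 hD hstab) hcl
  have hbound := mul_add_sub_le_of_le_muVal hs0 hs1 hq0 (card_div_le_one I₀) (rhoX_le_one x a)
    hD (Nat.cast_nonneg N) hM he
  have hNq : N * q * s = #I₀ * s := by rw [mul_div_cancel₀ _ (by positivity)]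
  rw [Fintype.card_fin] at hup
  linarith [hmax θo]

/-- the parametric error bound under strict monotonicity of `ℓ` on `[0,∞)`. -/
theorem mce_error_bound {n N : ℕ} (hN : 0 < N)
    (x : Fin N → Fin n → ℝ) (hx : ∀ t, x t ≠ 0)
    (θo : Fin n → ℝ) (v y : Fin N → ℝ)
    (hy : ∀ t, y t = dotR (x t) θo + v t)
    (ε : ℝ) (hε : 0 ≤ ε)
    (ℓ : ℝ → ℝ) (αl : ℝ) (hαl : 0 < αl)
    (hP1 : ∀ a, 0 ≤ ℓ a) (hP1' : ∀ a, ℓ a = 0 ↔ a = 0)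
    (hP2 : ∀ a, ℓ (-a) = ℓ a)
    (hP3 : ∀ a b, |a| ≤ |b| → ℓ a ≤ ℓ b)
    (hP4 : ∀ a b, αl * ℓ a - ℓ b ≤ ℓ (a - b))
    (hmono : StrictMonoOn ℓ (Set.Ici (0 : ℝ)))
    (γ : ℝ) (hγ : 0 < γ) (a : ℝ) (ha : 0 < a) (ha1 : a ≤ 1)
    (hstab : 1 <
      rhoX x a / (1 + Real.exp (-(γ * ℓ ε))) +
        Real.exp (-(γ * ℓ ε)) *
          (((Finset.univ.filter fun t => |v t| ≤ ε).card : ℝ) / N))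
    (θs : Fin n → ℝ)
    (hmax : ∀ θ : Fin n → ℝ,
      ∑ k, Real.exp (-(γ * ℓ (y k - dotR (x k) θ))) ≤
        ∑ k, Real.exp (-(γ * ℓ (y k - dotR (x k) θs))))
    (c : ℝ) (hc : 0 ≤ c)
    (hcl : (1 / (γ * αl)) *
        Real.log (1 /
          muVal (Real.exp (-(γ * ℓ ε)))
            (((Finset.univ.filter fun t => |v t| ≤ ε).card : ℝ) / N)
            (rhoX x a)) ≤ ℓ c) :
    nrm (θs - θo) ≤ c / (a * (⨅ t, nrm (x t))) :=
  mce_error_bound_general x hx θo v y hy ε ℓ αl hαl hP1 hP3 hP4 hmono γ hγ a ha hstab θs hmax c hc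
    hcl
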